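/- arXiv:1402.7290 — 3 statements merged into one kernel-verified Lean document; each statement's English description precedes it below -/
import Mathlib

section
/- Let Z be a complete metric space and f₁, ..., fₘ : Z → Z contractions (m ≥ 2, each with Lipschitz constant < 1). Then there exists a unique nonempty compact set X ⊆ Z with ⋃ⱼ fⱼ(X) = X. -/
/-!
The Hutchinson operator `A ↦ ⋃ j, f j '' A` maps nonempty compact sets to nonempty compact
sets, and since a `K`-Lipschitz map moves Hausdorff distances by at most a factor `K`, it is
a contraction of the complete space of nonempty compacts, with constant `max_j α j < 1`.
Banach's fixed point theorem then gives the attractor together with its uniqueness.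
-/

open scoped NNReal ENNReal

open Metric Set TopologicalSpace

section Lipschitz

variable {α β : Type*} [PseudoEMetricSpace α] [PseudoEMetricSpace β] {f : α → β} {K : ℝ≥0}

theorem LipschitzWith.infEDist_image_le (hf : LipschitzWith K f) {t : Set α} (ht : t.Nonempty)
    (x : α) : infEDist (f x) (f '' t) ≤ K * infEDist x t := by
  have hy : ∀ y ∈ t, infEDist (f x) (f '' t) ≤ K * edist x y := fun y hy =>
    (infEDist_le_edist_of_mem (mem_image_of_mem f hy)).trans (hf x y)
  rcases eq_or_ne K 0 with rfl | hK
  · -- `0 * ⊤ = 0` in `ℝ≥0∞`, so `K` cannot be pulled into the infimum; one point suffices.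
    simpa using hy ht.some ht.some_mem
  · have hK' : (K : ℝ≥0∞) ≠ 0 := ENNReal.coe_ne_zero.2 hK
    calc infEDist (f x) (f '' t) ≤ ⨅ y ∈ t, K * edist x y := le_iInf₂ hy
      _ = K * infEDist x t := by simp only [infEDist, ENNReal.mul_iInf_of_ne hK' ENNReal.coe_ne_top]

theorem LipschitzWith.hausdorffEDist_image_le (hf : LipschitzWith K f) {s t : Set α}
    (hs : s.Nonempty) (ht : t.Nonempty) :
    hausdorffEDist (f '' s) (f '' t) ≤ K * hausdorffEDist s t := by
  refine hausdorffEDist_le_of_infEDist ?_ ?_ <;> rintro _ ⟨x, hx, rfl⟩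
  · exact (hf.infEDist_image_le ht x).trans (by gcongr; exact infEDist_le_hausdorffEDist_of_mem hx)
  · rw [hausdorffEDist_comm]
    exact (hf.infEDist_image_le hs x).trans (by gcongr; exact infEDist_le_hausdorffEDist_of_mem hx)

end Lipschitz

namespace TopologicalSpace.NonemptyCompacts

variable {α ι : Type*} [Nonempty ι] [Finite ι]

def hutchinson [TopologicalSpace α] (f : ι → α → α) (hf : ∀ i, Continuous (f i))
    (A : NonemptyCompacts α) : NonemptyCompacts α where
  carrier := ⋃ i, f i '' A
  isCompact' := isCompact_iUnion fun i => A.isCompact.image (hf i)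
  nonempty' := nonempty_iUnion.mpr ⟨Classical.arbitrary ι, A.nonempty.image _⟩

theorem lipschitzWith_hutchinson [EMetricSpace α] {f : ι → α → α} {K : ℝ≥0}
    (hf : ∀ i, LipschitzWith K (f i)) :
    LipschitzWith K (hutchinson f fun i => (hf i).continuous) := fun A B =>
  calc hausdorffEDist (⋃ i, f i '' A) (⋃ i, f i '' B)
      ≤ ⨆ i, hausdorffEDist (f i '' A) (f i '' B) := hausdorffEDist_iUnion_le
    _ ≤ K * hausdorffEDist (A : Set α) B :=
        iSup_le fun i => (hf i).hausdorffEDist_image_le A.nonempty B.nonempty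

end TopologicalSpace.NonemptyCompacts

/-- Hutchinson's theorem: a finite family of contractions on a nonempty complete
metric space has a unique nonempty compact attractor. -/
theorem stmt_8 {Z : Type*} [MetricSpace Z] [CompleteSpace Z] [Nonempty Z]
    (m : ℕ) (hm : 2 ≤ m) (f : Fin m → Z → Z) (α : Fin m → ℝ≥0)
    (hα : ∀ j, α j < 1) (hf : ∀ j, LipschitzWith (α j) (f j)) :
    ∃! X : Set Z, X.Nonempty ∧ IsCompact X ∧ (⋃ j, f j '' X) = X := by
  have : Nonempty (Fin m) := ⟨⟨0, by omega⟩⟩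
  set c : ℝ≥0 := Finset.univ.sup α
  have hc : c < 1 := (Finset.sup_lt_iff zero_lt_one).2 fun j _ => hα j
  have hfc : ∀ j, LipschitzWith c (f j) := fun j =>
    (hf j).weaken (Finset.le_sup (Finset.mem_univ j))
  have hF : ContractingWith c (NonemptyCompacts.hutchinson f fun j => (hfc j).continuous) :=
    ⟨hc, NonemptyCompacts.lipschitzWith_hutchinson hfc⟩
  refine ⟨hF.fixedPoint _, ⟨(hF.fixedPoint _).nonempty, (hF.fixedPoint _).isCompact,
    congrArg SetLike.coe hF.fixedPoint_isFixedPt⟩, ?_⟩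
  rintro X ⟨hne, hcpt, hX⟩
  exact congrArg SetLike.coe
    (hF.fixedPoint_unique (x := ⟨⟨X, hcpt⟩, hne⟩) (NonemptyCompacts.ext hX))
end

section
/- Let Z be a complete metric space and f₁, ..., fₘ : Z → Z contractions (m ≥ 2), each injective, such that the set of all fixed points ⋃ⱼ {z : fⱼ(z) = z} has at least two elements. Then the unique nonempty compact attractor X satisfying ⋃ⱼ fⱼ(X) = X is perfect (has no isolated points). -/
open scoped NNReal

/-- If the contractions of an IFS are injective and the set of all their fixed
points is not a singleton, then the attractor is perfect (every point of it is
an accumulation point of it). -/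
theorem stmt_9 {Z : Type*} [MetricSpace Z] [CompleteSpace Z] [Nonempty Z]
    (m : ℕ) (hm : 2 ≤ m) (f : Fin m → Z → Z) (α : Fin m → ℝ≥0)
    (hα : ∀ j, α j < 1) (hf : ∀ j, LipschitzWith (α j) (f j))
    (hinj : ∀ j, Function.Injective (f j))
    (hfix : ∃ z z' : Z, z ≠ z' ∧ (∃ j, f j z = z) ∧ (∃ j', f j' z' = z'))
    (X : Set Z) (hne : X.Nonempty) (hcomp : IsCompact X)
    (hattr : (⋃ j, f j '' X) = X) :
    Preperfect X := by
  have hmaps : ∀ j, f j '' X ⊆ X := fun j x hx => by rw [← hattr]; exact Set.mem_iUnion.2 ⟨j, hx⟩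
  -- fixed points belong to X
  have hfixmem : ∀ j z, f j z = z → z ∈ X := by
    intro j z hz
    have hc : ContractingWith (α j) (f j) := ⟨hα j, hf j⟩
    obtain ⟨x₀, hx₀⟩ := hne
    have hiter : ∀ n, (f j)^[n] x₀ ∈ X := by
      intro n
      induction n with
      | zero => exact hx₀
      | succ n ih => rw [Function.iterate_succ_apply']; exact hmaps j ⟨_, ih, rfl⟩
    have htend := hc.tendsto_iterate_fixedPoint x₀
    have hz' : z = hc.fixedPoint := hc.fixedPoint_unique hz
    rw [← hz'] at htend
    exact hcomp.isClosed.mem_of_tendsto htend (Filter.Eventually.of_forall hiter)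
  obtain ⟨z, z', hzz', ⟨j₀, hj₀⟩, ⟨j₁, hj₁⟩⟩ := hfix
  have hzX : z ∈ X := hfixmem j₀ z hj₀
  have hz'X : z' ∈ X := hfixmem j₁ z' hj₁
  -- uniform contraction ratio
  haveI : Nonempty (Fin m) := ⟨⟨0, lt_of_lt_of_le (by norm_num) hm⟩⟩
  set c : ℝ≥0 := Finset.univ.sup α with hc
  have hc1 : c < 1 := Finset.sup_lt_iff (by norm_num : (⊥ : ℝ≥0) < 1) |>.2
    fun j _ => hα j
  have hαc : ∀ j, α j ≤ c := fun j => Finset.le_sup (Finset.mem_univ j)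
  -- key: small pieces containing x with two points
  have key : ∀ (n : ℕ) (x : Z), x ∈ X → ∃ S : Set Z, S ⊆ X ∧ x ∈ S ∧
      EMetric.diam S ≤ (c : ENNReal) ^ n * EMetric.diam X ∧
      ∃ a ∈ S, ∃ b ∈ S, a ≠ b := by
    intro n
    induction n with
    | zero =>
      intro x hx
      exact ⟨X, le_refl _, hx, by simp, z, hzX, z', hz'X, hzz'⟩
    | succ n ih =>
      intro x hx
      rw [← hattr] at hx
      obtain ⟨_, ⟨j, rfl⟩, y, hyX, rfl⟩ := hx
      obtain ⟨S, hSX, hyS, hSd, a, haS, b, hbS, hab⟩ := ih y hyX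
      refine ⟨f j '' S, (Set.image_mono hSX).trans (hmaps j), ⟨y, hyS, rfl⟩, ?_,
        f j a, ⟨a, haS, rfl⟩, f j b, ⟨b, hbS, rfl⟩, fun h => hab (hinj j h)⟩
      calc EMetric.diam (f j '' S) ≤ (α j : ENNReal) * EMetric.diam S :=
            (hf j).ediam_image_le S
        _ ≤ (c : ENNReal) * ((c : ENNReal) ^ n * EMetric.diam X) := by
            exact mul_le_mul' (ENNReal.coe_le_coe.2 (hαc j)) hSd
        _ = (c : ENNReal) ^ (n + 1) * EMetric.diam X := by ring
  -- conclude
  intro x hx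
  rw [accPt_iff_nhds]
  intro U hU
  rcases EMetric.mem_nhds_iff.1 hU with ⟨ε, hε, hball⟩
  -- find n with c^n * diam X < ε
  have hD : EMetric.diam X ≠ ⊤ := hcomp.isBounded.ediam_ne_top
  have hsmall : ∃ n : ℕ, (c : ENNReal) ^ n * EMetric.diam X < ε := by
    have : Filter.Tendsto (fun n : ℕ => (c : ENNReal) ^ n * EMetric.diam X)
        Filter.atTop (nhds (0 * EMetric.diam X)) :=
      ENNReal.Tendsto.mul_const (ENNReal.tendsto_pow_atTop_nhds_zero_of_lt_one
        (by exact_mod_cast hc1)) (Or.inr hD)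
    rw [zero_mul] at this
    have := this.eventually_lt_const hε
    exact this.exists
  obtain ⟨n, hn⟩ := hsmall
  obtain ⟨S, hSX, hxS, hSd, a, haS, b, hbS, hab⟩ := key n x hx
  rcases ne_or_eq a x with h | rfl
  · refine ⟨a, ⟨hball ?_, hSX haS⟩, h⟩
    exact lt_of_le_of_lt (le_trans (EMetric.edist_le_diam_of_mem haS hxS) hSd) hn
  · refine ⟨b, ⟨hball ?_, hSX hbS⟩, fun h => hab h.symm⟩
    exact lt_of_le_of_lt (le_trans (EMetric.edist_le_diam_of_mem hbS hxS) hSd) hn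
end

section
/- Let Z be a complete metric space and f₁, ..., fₘ : Z → Z contractions with Lipschitz constants α₁, ..., αₘ such that α₁ + ... + αₘ < 1. Then the unique nonempty compact attractor X with ⋃ⱼ fⱼ(X) = X is totally disconnected. -/
/-!
Iterating the attractor equation `n` times covers `X` by the images of `X` under
the `mⁿ` compositions of `n` maps, whose diameters sum to at most `(∑ αⱼ)ⁿ diam X → 0`.
A connected subset `T` through `x` and `y` is covered by the same sets; projecting by
`dist x ·` onto the real line shows that `[0, dist x y]` is covered by sets of
total length at most that sum, so `dist x y = 0`.
-/

open Set Metric Filter MeasureTheory Topology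
open scoped ENNReal NNReal

universe u

theorem IsPreconnected.edist_le_sum_ediam {Z ι : Type*} [PseudoMetricSpace Z] [Fintype ι]
    {T : Set Z} (hT : IsPreconnected T) {V : ι → Set Z} (hTV : T ⊆ ⋃ i, V i)
    {x y : Z} (hx : x ∈ T) (hy : y ∈ T) :
    edist x y ≤ ∑ i, ediam (V i) := by
  have hg : LipschitzWith 1 (dist x) := LipschitzWith.dist_right x
  have hIcc : Icc 0 (dist x y) ⊆ ⋃ i, dist x '' V i := by
    rw [← image_iUnion]
    exact ((hT.image _ hg.continuous.continuousOn).Icc_subset ⟨x, hx, dist_self x⟩ ⟨y, hy, rfl⟩).trans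
      (image_mono hTV)
  calc edist x y = volume (Icc 0 (dist x y)) := by rw [Real.volume_Icc, sub_zero, edist_dist]
    _ ≤ ∑ i, volume (dist x '' V i) := (measure_mono hIcc).trans (measure_iUnion_fintype_le _ _)
    _ ≤ ∑ i, ediam (V i) := Finset.sum_le_sum fun i _ =>
      (Real.volume_le_diam _).trans <| (hg.ediam_image_le _).trans_eq (one_mul _)

theorem isTotallyDisconnected_of_tendsto_sum_ediam {Z : Type*} [MetricSpace Z] {X : Set Z}
    {u : ℕ → ℝ≥0∞} (hu : Tendsto u atTop (𝓝 0))
    (hcover : ∀ n, ∃ (ι : Type*) (_ : Fintype ι) (V : ι → Set Z),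
      X ⊆ ⋃ i, V i ∧ ∑ i, ediam (V i) ≤ u n) :
    IsTotallyDisconnected X := by
  intro T hTX hT x hx y hy
  have hle : ∀ n, edist x y ≤ u n := fun n => by
    obtain ⟨ι, _, V, hXV, hV⟩ := hcover n
    exact (hT.edist_le_sum_ediam (hTX.trans hXV) hx hy).trans hV
  exact edist_le_zero.1 (ge_of_tendsto' hu hle)

theorem exists_cover_sum_ediam_le_pow {Z : Type*} {J : Type u} [PseudoMetricSpace Z] [Fintype J]
    {f : J → Z → Z} {K : J → ℝ≥0} (hf : ∀ j, LipschitzWith (K j) (f j))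
    {X : Set Z} (hX : X ⊆ ⋃ j, f j '' X) (n : ℕ) :
    ∃ (ι : Type u) (_ : Fintype ι) (V : ι → Set Z),
      X ⊆ ⋃ i, V i ∧ ∑ i, ediam (V i) ≤ (∑ j, (K j : ℝ≥0∞)) ^ n * ediam X := by
  induction n with
  | zero => exact ⟨PUnit, inferInstance, fun _ => X, subset_iUnion (fun _ => X) PUnit.unit, by simp⟩
  | succ n ih =>
    obtain ⟨ι, _, V, hXV, hV⟩ := ih
    refine ⟨J × ι, inferInstance, fun p => f p.1 '' V p.2, ?_, ?_⟩
    · refine hX.trans <| iUnion_subset fun j => (image_mono hXV).trans ?_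
      rw [image_iUnion]
      exact iUnion_subset fun i => subset_iUnion (fun p : J × ι => f p.1 '' V p.2) (j, i)
    · calc ∑ p : J × ι, ediam (f p.1 '' V p.2)
          ≤ ∑ p : J × ι, (K p.1 : ℝ≥0∞) * ediam (V p.2) :=
            Finset.sum_le_sum fun p _ => (hf p.1).ediam_image_le _
        _ = (∑ j, (K j : ℝ≥0∞)) * ∑ i, ediam (V i) := by
            rw [Fintype.sum_prod_type, Finset.sum_mul_sum]
        _ ≤ (∑ j, (K j : ℝ≥0∞)) ^ (n + 1) * ediam X := by
            rw [pow_succ', mul_assoc]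
            gcongr

theorem stmt_10_general {Z : Type*} [MetricSpace Z]
    (m : ℕ) (f : Fin m → Z → Z) (α : Fin m → ℝ)
    (hα : ∀ j, 0 ≤ α j)
    (hcontr : ∀ j, ∀ z z', dist (f j z) (f j z') ≤ α j * dist z z')
    (hsum : (∑ j, α j) < 1)
    (X : Set Z) (hcomp : IsCompact X)
    (hattr : (⋃ j, f j '' X) = X) :
    IsTotallyDisconnected X := by
  set K : Fin m → ℝ≥0 := fun j => ⟨α j, hα j⟩
  have hf : ∀ j, LipschitzWith (K j) (f j) := fun j => LipschitzWith.of_dist_le_mul (hcontr j)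
  have hr : ∑ j, (K j : ℝ≥0∞) < 1 := by
    rw [← ENNReal.ofNNReal_finsetSum, ENNReal.coe_lt_one_iff, ← NNReal.coe_lt_one]
    push_cast
    exact hsum
  refine isTotallyDisconnected_of_tendsto_sum_ediam ?_ (exists_cover_sum_ediam_le_pow hf hattr.ge)
  simpa using ENNReal.Tendsto.mul_const (ENNReal.tendsto_pow_atTop_nhds_zero_of_lt_one hr)
    (Or.inr hcomp.isBounded.ediam_ne_top)

/-- If the sum of the Lipschitz constants of the contractions of an IFS is
less than 1, the attractor is totally disconnected. -/
theorem stmt_10 {Z : Type*} [MetricSpace Z] [CompleteSpace Z] [Nonempty Z]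
    (m : ℕ) (f : Fin m → Z → Z) (α : Fin m → ℝ)
    (hα : ∀ j, 0 ≤ α j)
    (hcontr : ∀ j, ∀ z z', dist (f j z) (f j z') ≤ α j * dist z z')
    (hsum : (∑ j, α j) < 1)
    (X : Set Z) (hne : X.Nonempty) (hcomp : IsCompact X)
    (hattr : (⋃ j, f j '' X) = X) :
    IsTotallyDisconnected X :=
  stmt_10_general m f α hα hcontr hsum X hcomp hattr
end
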